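/- arXiv:2512.21753 — 2 statements merged into one kernel-verified Lean document; each statement's English description precedes it below -/
import Mathlib

section
/- For every real number t with 0 < t < 1/2, the series Σ_{n=0}^∞ f(0,n)·tⁿ converges and its sum equals (1 − √(1 − 4t²))/(2t²). -/
/-- The number of walks of length `n` on the nonnegative integers starting at `0`,
ending at `i`, with steps `+1` or `-1`. -/
noncomputable def walkCount (i n : ℕ) : ℕ :=
  Nat.card {w : Fin (n + 1) → ℕ //
    w 0 = 0 ∧ w (Fin.last n) = i ∧
    ∀ k : Fin n, ((w k.succ : ℤ) - (w k.castSucc : ℤ)).natAbs = 1}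

/-!
Recording each step of a walk as an up- or down-step turns the walks from `0` to `0` of length `n`
into the Dyck words of length `n`: the height after `k` steps is the number of `U`s minus the number
of `D`s among the first `k` letters. Hence `f(0, 2m)` is the Catalan number `C m`, `f(0, n) = 0` for
odd `n`, and the series is the Catalan generating function evaluated at `x = t²`.

For `0 < x ≤ 1/4`, let `g = (1 - √(1 - 4x)) / (2x)` be the smaller root of `1 + x y² = y`. By the
recurrence `C (m + 1) = ∑ C i C (m - i)`, the partial sums `P N` of `∑ C m xᵐ` satisfy
`P (N + 1) ≤ 1 + x (P N)²`, so by induction they are all at most `g`. The series therefore converges, its sum satisfies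
the same quadratic by the Cauchy product, and being at most `g` it equals `g`.
-/

open Finset DyckStep

lemma sum_range_sum_antidiagonal_le_sq {R : Type*} [CommSemiring R] [PartialOrder R]
    [IsOrderedRing R] {f : ℕ → R} (hf : ∀ i, 0 ≤ f i) (N : ℕ) :
    ∑ m ∈ range N, ∑ p ∈ antidiagonal m, f p.1 * f p.2 ≤ (∑ i ∈ range N, f i) ^ 2 := by
  simp only [Nat.sum_antidiagonal_eq_sum_range_succ (fun i j => f i * f j),
    sum_range_diag_flip N (fun i j => f i * f j), ← mul_sum, sq, sum_mul]
  gcongr with m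
  · exact hf m
  · exact fun i _ _ => hf i
  · exact Nat.sub_le N m

lemma catalan_succ_mul_pow_succ {R : Type*} [CommSemiring R] (x : R) (m : ℕ) :
    (catalan (m + 1) : R) * x ^ (m + 1) =
      x * ∑ p ∈ antidiagonal m, (catalan p.1 * x ^ p.1) * (catalan p.2 * x ^ p.2) := by
  rw [catalan_succ', Nat.cast_sum, sum_mul, mul_sum]
  refine sum_congr rfl fun p hp => ?_
  rw [HasAntidiagonal.mem_antidiagonal] at hp
  rw [← hp]
  push_cast
  ring

lemma sum_range_catalan_mul_pow_le {x g : ℝ} (hx : 0 ≤ x) (hg : 0 ≤ g)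
    (hgx : 1 + x * g ^ 2 ≤ g) (N : ℕ) : ∑ m ∈ range N, catalan m * x ^ m ≤ g := by
  induction N with
  | zero => simpa using hg
  | succ N ih =>
    have hfac := sum_range_sum_antidiagonal_le_sq (f := fun m => (catalan m : ℝ) * x ^ m)
      (fun m => by positivity) N
    have hP : 0 ≤ ∑ m ∈ range N, (catalan m : ℝ) * x ^ m := sum_nonneg fun m _ => by positivity
    calc ∑ m ∈ range (N + 1), (catalan m : ℝ) * x ^ m
        = 1 + x * ∑ m ∈ range N, ∑ p ∈ antidiagonal m,
            (catalan p.1 * x ^ p.1) * (catalan p.2 * x ^ p.2) := by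
          simp [sum_range_succ', catalan_succ_mul_pow_succ, mul_sum, add_comm]
      _ ≤ 1 + x * (∑ m ∈ range N, (catalan m : ℝ) * x ^ m) ^ 2 := by gcongr
      _ ≤ 1 + x * g ^ 2 := by gcongr
      _ ≤ g := hgx

lemma tsum_catalan_mul_pow_eq {x : ℝ} (hx : 0 ≤ x)
    (hs : Summable fun m => (catalan m : ℝ) * x ^ m) :
    ∑' m, (catalan m : ℝ) * x ^ m = 1 + x * (∑' m, (catalan m : ℝ) * x ^ m) ^ 2 := by
  have hnorm : Summable fun m => ‖(catalan m : ℝ) * x ^ m‖ := by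
    simpa [abs_of_nonneg hx] using hs
  rw [sq, tsum_mul_tsum_eq_tsum_sum_antidiagonal_of_summable_norm hnorm hnorm,
    hs.tsum_eq_zero_add, ← tsum_mul_left]
  simp [catalan_succ_mul_pow_succ]

theorem hasSum_catalan_mul_pow {x : ℝ} (hx0 : 0 < x) (hx1 : x ≤ 1 / 4) :
    HasSum (fun m => (catalan m : ℝ) * x ^ m) ((1 - √(1 - 4 * x)) / (2 * x)) := by
  set r := √(1 - 4 * x)
  set g := (1 - r) / (2 * x)
  have hr0 : 0 ≤ r := Real.sqrt_nonneg _
  have hr2 : r ^ 2 = 1 - 4 * x := Real.sq_sqrt (by linarith)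
  have hr1 : r ≤ 1 := by nlinarith
  have hg0 : 0 ≤ g := div_nonneg (by linarith) (by linarith)
  have hxg : 2 * x * g = 1 - r := mul_div_cancel₀ _ (by positivity)
  have hgx : 1 + x * g ^ 2 = g := by
    refine mul_left_cancel₀ (mul_ne_zero four_ne_zero hx0.ne') ?_
    linear_combination hr2 + (2 * x * g - 1 - r) * hxg
  have hle := sum_range_catalan_mul_pow_le hx0.le hg0 hgx.le
  have hs : Summable fun m => (catalan m : ℝ) * x ^ m :=
    summable_of_sum_range_le (fun m => by positivity) hle
  set S := ∑' m, (catalan m : ℝ) * x ^ m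
  have hSg : S ≤ g := hs.tsum_le_of_sum_range_le hle
  have hS := tsum_catalan_mul_pow_eq hx0.le hs
  -- subtract the quadratic equations satisfied by `S` and `g`
  have hgap : x * (g - S) ^ 2 = -(r * (g - S)) := by
    linear_combination (-1) * hgx + (-1) * hS + (g - S) * hxg
  have hsq : (g - S) ^ 2 ≤ 0 := by nlinarith [mul_nonneg hr0 (sub_nonneg.2 hSg)]
  rw [sub_eq_zero.1 (pow_eq_zero_iff two_ne_zero |>.1 (le_antisymm hsq (sq_nonneg _)))]
  exact hs.hasSum

def stepHeight (l : List DyckStep) : ℤ := l.count U - l.count D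

@[simp] lemma stepHeight_nil : stepHeight [] = 0 := rfl

@[simp] lemma stepHeight_append (l₁ l₂ : List DyckStep) :
    stepHeight (l₁ ++ l₂) = stepHeight l₁ + stepHeight l₂ := by
  simp only [stepHeight, List.count_append]; push_cast; ring

@[simp] lemma stepHeight_U : stepHeight [U] = 1 := rfl
@[simp] lemma stepHeight_D : stepHeight [D] = -1 := rfl

lemma stepHeight_take_succ (l : List DyckStep) {k : ℕ} (hk : k < l.length) :
    stepHeight (l.take (k + 1)) = stepHeight (l.take k) + stepHeight [l[k]] := by
  rw [List.take_add_one, List.getElem?_eq_getElem hk, Option.toList_some, stepHeight_append]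

lemma stepHeight_ite_lt {a b : ℕ} (h : ((b : ℤ) - a).natAbs = 1) :
    stepHeight [if a < b then U else D] = b - a := by
  split_ifs <;> simp <;> omega

namespace DyckWord

lemma stepHeight_eq_zero (p : DyckWord) : stepHeight p.toList = 0 := by
  simp [stepHeight, p.count_U_eq_count_D]

lemma stepHeight_take_nonneg (p : DyckWord) (i : ℕ) : 0 ≤ stepHeight (p.toList.take i) := by
  simpa [stepHeight] using p.count_D_le_count_U i

end DyckWord

-- the type counted by `walkCount 0 n`, verbatim
def Excursion (n : ℕ) : Type :=
  {w : Fin (n + 1) → ℕ // w 0 = 0 ∧ w (Fin.last n) = 0 ∧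
    ∀ k : Fin n, ((w k.succ : ℤ) - (w k.castSucc : ℤ)).natAbs = 1}

def walkSteps {n : ℕ} (w : Fin (n + 1) → ℕ) : List DyckStep :=
  List.ofFn fun k : Fin n => if w k.castSucc < w k.succ then U else D

@[simp] lemma length_walkSteps {n : ℕ} (w : Fin (n + 1) → ℕ) : (walkSteps w).length = n := by
  simp [walkSteps]

lemma stepHeight_take_walkSteps {n : ℕ} {w : Fin (n + 1) → ℕ}
    (hw : ∀ k : Fin n, ((w k.succ : ℤ) - (w k.castSucc : ℤ)).natAbs = 1) (k : Fin (n + 1)) :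
    stepHeight ((walkSteps w).take k) = w k - w 0 := by
  induction k using Fin.induction with
  | zero => simp
  | succ k ih =>
    rw [Fin.val_castSucc] at ih
    rw [Fin.val_succ, stepHeight_take_succ _ (by simp), ih]
    simp only [walkSteps, List.getElem_ofFn, Fin.eta]
    rw [stepHeight_ite_lt (hw k)]
    ring

namespace Excursion

variable {n : ℕ}

lemma stepHeight_take (w : Excursion n) (k : Fin (n + 1)) :
    stepHeight ((walkSteps w.1).take k) = w.1 k := by
  simpa [w.2.1] using stepHeight_take_walkSteps w.2.2.2 k

def toDyckWord (w : Excursion n) : DyckWord where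
  toList := walkSteps w.1
  count_U_eq_count_D := by
    have h := w.stepHeight_take (Fin.last n)
    rw [Fin.val_last, List.take_of_length_le (length_walkSteps w.1).le, w.2.2.1] at h
    simpa [stepHeight, sub_eq_zero] using h
  count_D_le_count_U i := by
    have h := w.stepHeight_take ⟨min i n, by omega⟩
    have : 0 ≤ stepHeight ((walkSteps w.1).take (min i n)) := h ▸ Int.natCast_nonneg _
    rw [List.take_eq_take_min, length_walkSteps]
    simpa [stepHeight] using this

end Excursion

namespace DyckWord

def height (p : DyckWord) (k : ℕ) : ℕ := (stepHeight (p.toList.take k)).toNat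

lemma natCast_height (p : DyckWord) (k : ℕ) :
    (p.height k : ℤ) = stepHeight (p.toList.take k) :=
  Int.toNat_of_nonneg (p.stepHeight_take_nonneg k)

lemma natCast_height_succ (p : DyckWord) {k : ℕ} (hk : k < p.toList.length) :
    (p.height (k + 1) : ℤ) = p.height k + stepHeight [p.toList[k]] := by
  rw [natCast_height, natCast_height, stepHeight_take_succ _ hk]

variable {n : ℕ}

def toExcursion (p : DyckWord) (hp : p.toList.length = n) : Excursion n :=
  ⟨fun k => p.height k, by simp [height], by simp [height, ← hp, stepHeight_eq_zero], fun k => by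
    dsimp only
    rw [Fin.val_succ, natCast_height_succ p (hp ▸ k.2), Fin.val_castSucc, add_sub_cancel_left]
    cases p.toList[k.1] <;> rfl⟩

lemma walkSteps_height (p : DyckWord) (hp : p.toList.length = n) :
    walkSteps (fun k : Fin (n + 1) => p.height k) = p.toList := by
  refine List.ext_getElem (by simp [hp]) fun i hi _ => ?_
  have hstep := natCast_height_succ p (k := i) (by omega)
  simp only [walkSteps, List.getElem_ofFn, Fin.val_castSucc, Fin.val_succ]
  cases h : p.toList[i] <;> simp only [h, stepHeight_U, stepHeight_D] at hstep <;>
    split_ifs <;> first | rfl | omega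

end DyckWord

def excursionEquivDyckWord (n : ℕ) : Excursion n ≃ {p : DyckWord // p.toList.length = n} where
  toFun w := ⟨w.toDyckWord, length_walkSteps _⟩
  invFun p := p.1.toExcursion p.2
  left_inv w := Subtype.ext <| funext fun k => by
    show w.toDyckWord.height k = w.1 k
    exact_mod_cast (w.toDyckWord.natCast_height k).trans (w.stepHeight_take k)
  right_inv p := Subtype.ext <| DyckWord.ext <| p.1.walkSteps_height p.2

lemma walkCount_zero_eq_card (n : ℕ) :
    walkCount 0 n = Nat.card {p : DyckWord // p.toList.length = n} :=
  Nat.card_congr (excursionEquivDyckWord n)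

lemma walkCount_zero_two_mul (m : ℕ) : walkCount 0 (2 * m) = catalan m := by
  rw [walkCount_zero_eq_card, ← DyckWord.card_dyckWord_semilength_eq_catalan,
    ← Nat.card_eq_fintype_card]
  refine Nat.card_congr (Equiv.subtypeEquivRight fun p => ?_)
  rw [← p.two_mul_semilength_eq_length]
  omega

lemma walkCount_zero_of_odd {n : ℕ} (hn : Odd n) : walkCount 0 n = 0 := by
  rw [walkCount_zero_eq_card, Nat.card_eq_zero]
  refine Or.inl ⟨fun p => ?_⟩
  rw [← p.2, ← p.1.two_mul_semilength_eq_length] at hn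
  exact Nat.not_odd_iff_even.2 (even_two_mul _) hn

theorem excursion_series_sum (t : ℝ) (ht0 : 0 < t) (ht1 : t < 1 / 2) :
    HasSum (fun n : ℕ => (walkCount 0 n : ℝ) * t ^ n)
      ((1 - Real.sqrt (1 - 4 * t ^ 2)) / (2 * t ^ 2)) := by
  have hcatalan := hasSum_catalan_mul_pow (x := t ^ 2) (by positivity) (by nlinarith)
  rw [← (mul_right_injective₀ two_ne_zero).hasSum_iff]
  · simpa [Function.comp_def, walkCount_zero_two_mul, pow_mul] using hcatalan
  · intro n hn
    have hodd : Odd n := Nat.not_even_iff_odd.1 fun ⟨m, hm⟩ => hn ⟨m, show 2 * m = n by omega⟩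
    rw [walkCount_zero_of_odd hodd, Nat.cast_zero, zero_mul]
end

section
/- For every natural number i and every real number t with 0 < t < 1/2, the series Σ_{n=0}^∞ f(i,n)·tⁿ converges and its sum equals ((1 − √(1 − 4t²))/(2t))^i · (1 − √(1 − 4t²))/(2t²). -/
def IsWalkTo (i n : ℕ) (w : Fin (n + 1) → ℕ) : Prop :=
  w 0 = 0 ∧ w (Fin.last n) = i ∧
    ∀ k : Fin n, ((w k.succ : ℤ) - (w k.castSucc : ℤ)).natAbs = 1

theorem walkCount_eq_card (i n : ℕ) : walkCount i n = Nat.card {w // IsWalkTo i n w} := rfl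

namespace IsWalkTo

variable {i j n : ℕ}

theorem init {w : Fin (n + 2) → ℕ} (h : IsWalkTo i (n + 1) w)
    (hj : w (Fin.last n).castSucc = j) : IsWalkTo j n (Fin.init w) := by
  subst hj
  refine ⟨h.1, rfl, fun k => ?_⟩
  simpa only [Fin.init, Fin.succ_castSucc] using h.2.2 k.castSucc

theorem last_step {w : Fin (n + 2) → ℕ} (h : IsWalkTo i (n + 1) w) :
    ((i : ℤ) - w (Fin.last n).castSucc).natAbs = 1 := by
  simpa only [← h.2.1, Fin.succ_last] using h.2.2 (Fin.last n)

theorem snoc {v : Fin (n + 1) → ℕ} (h : IsWalkTo j n v)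
    (hij : ((i : ℤ) - j).natAbs = 1) : IsWalkTo i (n + 1) (Fin.snoc v i) := by
  refine ⟨by simpa using h.1, by simp, fun k => ?_⟩
  induction k using Fin.lastCases with
  | last => simpa [h.2.1] using hij
  | cast k =>
    rw [Fin.succ_castSucc, Fin.snoc_castSucc, Fin.snoc_castSucc]
    exact h.2.2 k

end IsWalkTo

def walkLastStepEquiv {i j n : ℕ} (hij : ((i : ℤ) - j).natAbs = 1) :
    {w // IsWalkTo i (n + 1) w ∧ w (Fin.last n).castSucc = j} ≃ {v // IsWalkTo j n v} where
  toFun w := ⟨Fin.init w.1, w.2.1.init w.2.2⟩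
  invFun v := ⟨Fin.snoc v.1 i, v.2.snoc hij, by simp [v.2.2.1]⟩
  left_inv w := Subtype.ext <| by
    conv_rhs => rw [← Fin.snoc_init_self w.1]
    rw [w.2.1.2.1]
  right_inv v := Subtype.ext (Fin.init_snoc (α := fun _ => ℕ) _ _)

def walkZeroSuccEquiv (n : ℕ) : {w // IsWalkTo 0 (n + 1) w} ≃ {v // IsWalkTo 1 n v} :=
  (Equiv.subtypeEquivRight fun w =>
    ⟨fun h => ⟨h, by have := h.last_step; omega⟩, And.left⟩).trans
  (walkLastStepEquiv (by norm_num))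

open scoped Classical in
noncomputable def walkSuccSuccEquiv (i n : ℕ) :
    {w // IsWalkTo (i + 1) (n + 1) w} ≃ {v // IsWalkTo i n v} ⊕ {v // IsWalkTo (i + 2) n v} :=
  (Equiv.subtypeEquivRight fun w =>
    ⟨fun h => by
      have := h.last_step
      obtain hj | hj : w (Fin.last n).castSucc = i ∨ w (Fin.last n).castSucc = i + 2 := by omega
      exacts [.inl ⟨h, hj⟩, .inr ⟨h, hj⟩], fun h : _ ∨ _ => h.elim And.left And.left⟩).trans <|
  (subtypeOrEquiv _ _ (by
    rw [Pi.disjoint_iff]; intro w; rw [Prop.disjoint_iff]; omega)).trans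
  (Equiv.sumCongr (walkLastStepEquiv (by push_cast; simp))
    (walkLastStepEquiv (by push_cast; omega)))

instance IsWalkTo.finite : ∀ i n, Finite {w // IsWalkTo i n w}
  | _, 0 => by
    refine @Finite.of_subsingleton _ ⟨fun v w => Subtype.ext (funext fun k => ?_)⟩
    rw [Subsingleton.elim (α := Fin 1) k 0, v.2.1, w.2.1]
  | 0, n + 1 => have := IsWalkTo.finite 1 n; .of_equiv _ (walkZeroSuccEquiv n).symm
  | i + 1, n + 1 =>
    have := IsWalkTo.finite i n; have := IsWalkTo.finite (i + 2) n
    .of_equiv _ (walkSuccSuccEquiv i n).symm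

theorem walkCount_zero_right (i : ℕ) : walkCount i 0 = if i = 0 then 1 else 0 := by
  rw [walkCount_eq_card]
  split_ifs with hi
  · subst hi
    refine Nat.card_eq_one_iff_exists.2 ⟨⟨0, rfl, rfl, fun k => k.elim0⟩, fun w => Subtype.ext ?_⟩
    exact funext fun k => by rw [Subsingleton.elim (α := Fin 1) k 0, w.2.1]; rfl
  · have : IsEmpty {w // IsWalkTo i 0 w} := ⟨fun w => hi (w.2.2.1.symm.trans w.2.1)⟩
    exact Nat.card_of_isEmpty

theorem walkCount_zero_succ (n : ℕ) : walkCount 0 (n + 1) = walkCount 1 n :=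
  Nat.card_congr (walkZeroSuccEquiv n)

theorem walkCount_succ_succ (i n : ℕ) :
    walkCount (i + 1) (n + 1) = walkCount i n + walkCount (i + 2) n := by
  rw [walkCount_eq_card, Nat.card_congr (walkSuccSuccEquiv i n), Nat.card_sum]; rfl

theorem walkCount_le_two_pow (i n : ℕ) : walkCount i n ≤ 2 ^ n := by
  induction n generalizing i with
  | zero => rw [walkCount_zero_right]; split_ifs <;> simp
  | succ n ih =>
    cases i with
    | zero => rw [walkCount_zero_succ, pow_succ]; have := ih 1; omega
    | succ i => rw [walkCount_succ_succ, pow_succ]; have := ih i; have := ih (i + 2); omega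

theorem eq_pow_mul_of_succ {M : Type*} [Monoid M] {u : ℕ → M} {a : M}
    (h : ∀ j, u (j + 1) = a * u j) : ∀ j, u j = a ^ j * u 0
  | 0 => by rw [pow_zero, one_mul]
  | j + 1 => by rw [h, eq_pow_mul_of_succ h j, pow_succ', mul_assoc]

open Filter in
theorem eq_zero_of_abs_le_of_succ {d : ℕ → ℝ} {b C : ℝ} (hb : 1 < |b|)
    (hd : ∀ j, |d j| ≤ C) (h : ∀ j, d (j + 1) = b * d j) : d = 0 := by
  suffices h0 : d 0 = 0 by ext j; rw [eq_pow_mul_of_succ h j, h0, mul_zero, Pi.zero_apply]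
  by_contra h0
  have hgrow : Tendsto (fun j => |b| ^ j * |d 0|) atTop atTop :=
    (tendsto_pow_atTop_atTop_of_one_lt hb).atTop_mul_const (abs_pos.2 h0)
  obtain ⟨j, hj⟩ := (hgrow.eventually_gt_atTop C).exists
  have := hd j
  rw [eq_pow_mul_of_succ h j, abs_mul, abs_pow] at this
  linarith

theorem eq_pow_mul_of_bounded_of_recurrence {u : ℕ → ℝ} {a b C : ℝ} (hb : 1 < |b|)
    (hu : ∀ j, |u j| ≤ C) (hrec : ∀ j, u (j + 2) = (a + b) * u (j + 1) - a * b * u j) :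
    ∀ j, u j = a ^ j * u 0 := by
  have hd : (fun j => u (j + 1) - a * u j) = 0 := by
    refine eq_zero_of_abs_le_of_succ hb (C := C + |a| * C) (fun j => ?_) (fun j => ?_)
    · calc |u (j + 1) - a * u j| ≤ |u (j + 1)| + |a| * |u j| := by
            rw [← abs_mul]; exact abs_sub _ _
        _ ≤ C + |a| * C := by gcongr <;> exact hu _
    · simp only [hrec]; ring
  exact eq_pow_mul_of_succ fun j => sub_eq_zero.1 (congrFun hd j)

noncomputable def walkGF (i : ℕ) (t : ℝ) : ℝ := ∑' n, (walkCount i n : ℝ) * t ^ n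

section WalkGF

variable {t : ℝ}

theorem norm_walkCount_mul_pow_le (i n : ℕ) (t : ℝ) :
    ‖(walkCount i n : ℝ) * t ^ n‖ ≤ (2 * |t|) ^ n := by
  rw [norm_mul, norm_pow, Real.norm_natCast, Real.norm_eq_abs, mul_pow]
  gcongr
  exact_mod_cast walkCount_le_two_pow i n

theorem summable_walkCount_mul_pow (i : ℕ) (ht : |t| < 1 / 2) :
    Summable fun n => (walkCount i n : ℝ) * t ^ n :=
  .of_norm_bounded (summable_geometric_of_lt_one (by positivity) (by linarith))
    (norm_walkCount_mul_pow_le i · t)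

theorem abs_walkGF_le (i : ℕ) (ht : |t| < 1 / 2) : |walkGF i t| ≤ (1 - 2 * |t|)⁻¹ :=
  tsum_of_norm_bounded (hasSum_geometric_of_lt_one (by positivity) (by linarith))
    (norm_walkCount_mul_pow_le i · t)

theorem walkGF_zero (ht : |t| < 1 / 2) : walkGF 0 t = 1 + t * walkGF 1 t := by
  rw [walkGF, (summable_walkCount_mul_pow 0 ht).tsum_eq_zero_add, walkGF, ← tsum_mul_left]
  simp only [walkCount_zero_right, walkCount_zero_succ, pow_succ]
  congr 1
  · simp
  · congr 1; ext n; ring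

theorem walkGF_succ (i : ℕ) (ht : |t| < 1 / 2) :
    walkGF (i + 1) t = t * walkGF i t + t * walkGF (i + 2) t := by
  rw [walkGF, (summable_walkCount_mul_pow (i + 1) ht).tsum_eq_zero_add, walkGF, walkGF,
    ← tsum_mul_left, ← tsum_mul_left, ← Summable.tsum_add
      ((summable_walkCount_mul_pow i ht).mul_left t)
      ((summable_walkCount_mul_pow (i + 2) ht).mul_left t)]
  simp only [walkCount_zero_right, walkCount_succ_succ, pow_succ, Nat.add_eq_zero_iff,
    one_ne_zero, and_false, if_false, Nat.cast_zero, zero_mul, zero_add, Nat.cast_add]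
  congr 1; ext n; ring

end WalkGF

noncomputable def walkRatio (t : ℝ) : ℝ := (1 - √(1 - 4 * t ^ 2)) / (2 * t)

section WalkRatio

variable {t : ℝ}

theorem walkRatio_quadratic (ht : 4 * t ^ 2 ≤ 1) :
    t * walkRatio t ^ 2 - walkRatio t + t = 0 := by
  rcases eq_or_ne t 0 with rfl | ht0
  · simp [walkRatio]
  have hs := Real.sq_sqrt (sub_nonneg.2 ht)
  rw [walkRatio]
  generalize √(1 - 4 * t ^ 2) = s at hs
  field_simp
  linear_combination hs

theorem walkRatio_pos (ht0 : 0 < t) : 0 < walkRatio t := by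
  have : √(1 - 4 * t ^ 2) < 1 := (Real.sqrt_lt' one_pos).2 (by nlinarith)
  exact div_pos (by linarith) (by linarith)

theorem walkRatio_lt_one (ht0 : 0 < t) (ht1 : t < 1 / 2) : walkRatio t < 1 := by
  have : 1 - 2 * t < √(1 - 4 * t ^ 2) := (Real.lt_sqrt (by linarith)).2 (by nlinarith)
  rw [walkRatio, div_lt_one (by linarith)]
  linarith

end WalkRatio

theorem walk_series_sum (i : ℕ) (t : ℝ) (ht0 : 0 < t) (ht1 : t < 1 / 2) :
    HasSum (fun n : ℕ => (walkCount i n : ℝ) * t ^ n)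
      (((1 - Real.sqrt (1 - 4 * t ^ 2)) / (2 * t)) ^ i *
        ((1 - Real.sqrt (1 - 4 * t ^ 2)) / (2 * t ^ 2))) := by
  have ht : |t| < 1 / 2 := by rwa [abs_of_pos ht0]
  have hα0 := walkRatio_pos ht0
  have hq := walkRatio_quadratic (t := t) (by nlinarith)
  have hgeom : ∀ j, walkGF j t = walkRatio t ^ j * walkGF 0 t := by
    refine eq_pow_mul_of_bounded_of_recurrence (b := (walkRatio t)⁻¹) ?_ (abs_walkGF_le · ht)
      fun j => ?_
    · rw [abs_inv, abs_of_pos hα0]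
      exact (one_lt_inv₀ hα0).2 (walkRatio_lt_one ht0 ht1)
    · have hroots : walkRatio t + (walkRatio t)⁻¹ = t⁻¹ := by
        field_simp
        linear_combination hq
      rw [hroots, mul_inv_cancel₀ hα0.ne', one_mul]
      field_simp
      linear_combination (-1 : ℝ) * walkGF_succ j ht
  have h0 : walkGF 0 t = walkRatio t / t := by
    have := walkGF_zero ht
    rw [hgeom 1] at this
    field_simp
    linear_combination walkRatio t * this + walkGF 0 t * hq
  rw [(summable_walkCount_mul_pow i ht).hasSum_iff, ← walkGF, hgeom, h0, walkRatio, div_div]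
  ring
end
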